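/- Let T be a CPTP map on a finite-dimensional Hilbert space and H_S a subspace with orthogonal projection Π_S. Then H_S is invariant for T if and only if T*(Π_S) ≥ Π_S (the projection is sub-harmonic). -/

import Mathlib

open Matrix
open scoped ComplexOrder

/-- The support `(ker X)ᗮ` of an operator. -/
noncomputable def msupp {n : Type*} [Fintype n] [DecidableEq n]
    (X : Matrix n n ℂ) : Submodule ℂ (EuclideanSpace ℂ n) :=
  (LinearMap.ker (Matrix.toEuclideanLin X))ᗮ

/-!
Write `Q = 1 - P`. A positive semidefinite `ρ` is supported in `H_S` iff `Q ρ = 0`, iff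
`tr (Q ρ) = 0`. The duality `tr (X T(ρ)) = tr (T*(X) ρ)` together with `T*(Q) = 1 - T*(P)`
(trace preservation) turns both directions into positivity of traces of products of positive
semidefinite matrices.
-/

open scoped MatrixOrder

namespace Matrix

variable {𝕜 : Type*} [RCLike 𝕜] {n m : Type*} [Fintype n] [Fintype m]

theorem PosSemidef.mul_eq_zero_of_conjTranspose_mul_mul_eq_zero {X : Matrix n n 𝕜}
    (hX : X.PosSemidef) {B : Matrix n m 𝕜} (h : Bᴴ * X * B = 0) : X * B = 0 := by
  refine mulVec_injective (funext fun v => ?_)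
  have hv : star (B *ᵥ v) ⬝ᵥ X *ᵥ (B *ᵥ v) = 0 := by
    rw [star_mulVec, ← dotProduct_mulVec, mulVec_mulVec, mulVec_mulVec, h, zero_mulVec,
      dotProduct_zero]
  rw [← mulVec_mulVec, (hX.dotProduct_mulVec_zero_iff _).mp hv, zero_mulVec]

theorem PosSemidef.trace_mul_nonneg [DecidableEq n] {A B : Matrix n n 𝕜} (hA : A.PosSemidef)
    (hB : B.PosSemidef) : 0 ≤ (A * B).trace := by
  obtain ⟨C, rfl⟩ := CStarAlgebra.nonneg_iff_eq_star_mul_self.mp hB.nonneg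
  rw [← mul_assoc, trace_mul_comm, ← mul_assoc]
  exact (hA.mul_mul_conjTranspose_same C).trace_nonneg

theorem _root_.IsStarProjection.posSemidef {P : Matrix n n 𝕜}
    (hP : IsStarProjection P) : P.PosSemidef :=
  nonneg_iff_posSemidef.mp hP.nonneg

/-- `tr (R X) = tr (R X R)`, and a positive semidefinite matrix of trace zero vanishes. -/
theorem PosSemidef.mul_eq_zero_iff_trace_mul_eq_zero {X R : Matrix n n 𝕜} (hX : X.PosSemidef)
    (hR : IsStarProjection R) : R * X = 0 ↔ (R * X).trace = 0 := by
  refine ⟨fun h => by rw [h, trace_zero], fun h => ?_⟩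
  have hR_herm : Rᴴ = R := hR.isSelfAdjoint
  have hRXR : R * X * R = 0 := by
    have hpsd := hX.conjTranspose_mul_mul_same R
    rw [hR_herm] at hpsd
    rwa [← hpsd.trace_eq_zero_iff, trace_mul_comm, ← mul_assoc, hR.isIdempotentElem.eq]
  have hXR := hX.mul_eq_zero_of_conjTranspose_mul_mul_eq_zero (B := R) (by rwa [hR_herm])
  simpa only [conjTranspose_mul, hR_herm, hX.isHermitian.eq, conjTranspose_zero] using
    congr($hXRᴴ)

end Matrix

section Kraus

variable {𝕜 : Type*} [RCLike 𝕜] {n ι : Type*} [Fintype n] [Fintype ι]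

def krausMap (M : ι → Matrix n n 𝕜) (ρ : Matrix n n 𝕜) : Matrix n n 𝕜 :=
  ∑ k, M k * ρ * (M k)ᴴ

/-- The paper's `T*`, the Hilbert–Schmidt adjoint of `T = krausMap M`. -/
def krausDual (M : ι → Matrix n n 𝕜) (X : Matrix n n 𝕜) : Matrix n n 𝕜 :=
  ∑ k, (M k)ᴴ * X * M k

variable (M : ι → Matrix n n 𝕜)

theorem Matrix.PosSemidef.krausMap {ρ : Matrix n n 𝕜} (hρ : ρ.PosSemidef) :
    (krausMap M ρ).PosSemidef :=
  posSemidef_sum _ fun k _ => hρ.mul_mul_conjTranspose_same (M k)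

theorem Matrix.PosSemidef.krausDual {X : Matrix n n 𝕜} (hX : X.PosSemidef) :
    (krausDual M X).PosSemidef :=
  posSemidef_sum _ fun k _ => hX.conjTranspose_mul_mul_same (M k)

theorem trace_mul_krausMap (X ρ : Matrix n n 𝕜) :
    (X * krausMap M ρ).trace = (krausDual M X * ρ).trace := by
  simp only [krausMap, krausDual, Finset.mul_sum, Finset.sum_mul, trace_sum]
  refine Finset.sum_congr rfl fun k _ => ?_
  rw [← mul_assoc, trace_mul_comm, ← mul_assoc, ← mul_assoc]

theorem krausDual_one_sub [DecidableEq n] (hTP : ∑ k, (M k)ᴴ * M k = 1) (X : Matrix n n 𝕜) :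
    krausDual M (1 - X) = 1 - krausDual M X := by
  simp only [krausDual, mul_sub, sub_mul, mul_one, Finset.sum_sub_distrib, hTP]

end Kraus

section Projection

variable {𝕜 : Type*} [RCLike 𝕜] {n ι : Type*} [Fintype n] [DecidableEq n] [Fintype ι]
  {M : ι → Matrix n n 𝕜} {P : Matrix n n 𝕜}

/-- With `Y = T*(1 - P) ≥ 0`, invariance gives `tr (P Y) = tr ((1 - P) T(P)) = 0`, so
`P Y = Y P = 0` and `T*(P) - P = (1 - P) - Y = (1 - P) T*(P) (1 - P)`. -/
theorem krausDual_sub_posSemidef_of_invariant (hTP : ∑ k, (M k)ᴴ * M k = 1)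
    (hP : IsStarProjection P) (hinv : (1 - P) * krausMap M P = 0) :
    (krausDual M P - P).PosSemidef := by
  have hP_herm : Pᴴ = P := hP.isSelfAdjoint
  set Y := krausDual M (1 - P) with hY_def
  have hY : Y.PosSemidef := hP.one_sub.posSemidef.krausDual M
  have hPY : P * Y = 0 := by
    rw [hY.mul_eq_zero_iff_trace_mul_eq_zero hP, trace_mul_comm, ← trace_mul_krausMap, hinv,
      trace_zero]
  have hYP : Y * P = 0 := by
    simpa only [conjTranspose_mul, hP_herm, hY.isHermitian.eq, conjTranspose_zero] using
      congr($hPYᴴ)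
  have hQYQ : (1 - P) * Y * (1 - P) = Y := by
    rw [sub_mul, one_mul, hPY, sub_zero, mul_sub, mul_one, hYP, sub_zero]
  have hconj : krausDual M P - P = (1 - P)ᴴ * krausDual M P * (1 - P) := by
    rw [conjTranspose_sub, conjTranspose_one, hP_herm,
      show krausDual M P = 1 - Y by rw [hY_def, krausDual_one_sub M hTP, sub_sub_cancel]]
    calc 1 - Y - P = (1 - P) * (1 - P) - (1 - P) * Y * (1 - P) := by
          rw [hP.one_sub.isIdempotentElem.eq, hQYQ, sub_right_comm]
      _ = (1 - P) * (1 - Y) * (1 - P) := by noncomm_ring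
  rw [hconj]
  exact (hP.posSemidef.krausDual M).conjTranspose_mul_mul_same _

/-- `tr ((1 - P) T(ρ)) = tr (T*(1 - P) ρ) = -tr ((T*(P) - P) ρ)` is both `≥ 0` and `≤ 0`. -/
theorem invariant_of_krausDual_sub_posSemidef (hTP : ∑ k, (M k)ᴴ * M k = 1)
    (hP : IsStarProjection P) (hsub : (krausDual M P - P).PosSemidef) {ρ : Matrix n n 𝕜}
    (hρ : ρ.PosSemidef) (hPρ : (1 - P) * ρ = 0) : (1 - P) * krausMap M ρ = 0 := by
  have hρP : ρ = P * ρ := by rwa [sub_mul, one_mul, sub_eq_zero] at hPρ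
  have htrace : ((1 - P) * krausMap M ρ).trace = -((krausDual M P - P) * ρ).trace := by
    rw [trace_mul_krausMap, krausDual_one_sub M hTP, ← trace_neg, sub_mul, sub_mul, one_mul,
      ← hρP, neg_sub]
  rw [(hρ.krausMap M).mul_eq_zero_iff_trace_mul_eq_zero hP.one_sub]
  refine le_antisymm ?_ (hP.one_sub.posSemidef.trace_mul_nonneg (hρ.krausMap M))
  rw [htrace, neg_nonpos]
  exact hsub.trace_mul_nonneg hρ

theorem invariant_iff_krausDual_sub_posSemidef (hTP : ∑ k, (M k)ᴴ * M k = 1)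
    (hP : IsStarProjection P) :
    (∀ ρ : Matrix n n 𝕜, ρ.PosSemidef → (1 - P) * ρ = 0 → (1 - P) * krausMap M ρ = 0) ↔
      (krausDual M P - P).PosSemidef :=
  ⟨fun hinv => krausDual_sub_posSemidef_of_invariant hTP hP
      (hinv P hP.posSemidef hP.one_sub_mul_self),
    fun hsub _ => invariant_of_krausDual_sub_posSemidef hTP hP hsub⟩

end Projection

section Support

variable {𝕜 : Type*} [RCLike 𝕜] {n m : Type*} [Fintype n] [DecidableEq n] [Fintype m]
  [DecidableEq m]

theorem Matrix.range_toEuclideanLin_le_iff {X : Matrix n m 𝕜} {P : Matrix n n 𝕜}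
    (hP : IsIdempotentElem P) :
    LinearMap.range X.toEuclideanLin ≤ LinearMap.range P.toEuclideanLin ↔ P * X = X := by
  have hPlin : IsIdempotentElem P.toEuclideanLin := by
    rw [IsIdempotentElem, Module.End.mul_eq_comp, ← toLpLin_mul_same, hP.eq]
  rw [← LinearMap.IsIdempotentElem.comp_eq_right_iff hPlin, ← toLpLin_mul_same,
    toEuclideanLin.injective.eq_iff]

theorem Matrix.IsHermitian.msupp_eq_range {X : Matrix n n ℂ} (hX : X.IsHermitian) :
    msupp X = LinearMap.range X.toEuclideanLin := by
  rw [msupp, LinearMap.orthogonal_ker, ← toEuclideanLin_conjTranspose_eq_adjoint, hX.eq]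

theorem Matrix.IsHermitian.msupp_le_range_iff {X P : Matrix n n ℂ} (hX : X.IsHermitian)
    (hP : IsIdempotentElem P) :
    msupp X ≤ LinearMap.range P.toEuclideanLin ↔ (1 - P) * X = 0 := by
  rw [hX.msupp_eq_range, range_toEuclideanLin_le_iff hP, sub_mul, one_mul, sub_eq_zero, eq_comm]

end Support

/-- For a CPTP map `T` with Kraus operators `M_k` and a subspace `H_S` given by an
orthogonal projection `P`, `H_S` is invariant for `T` iff `T*(P) ≥ P` in the Loewner
order (`P` is sub-harmonic). -/
theorem stmt_5 {d K : ℕ} (M : Fin K → Matrix (Fin d) (Fin d) ℂ)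
    (hTP : ∑ k, (M k)ᴴ * M k = 1)
    (P : Matrix (Fin d) (Fin d) ℂ) (hProj : P * P = P) (hHerm : Pᴴ = P) :
    (∀ ρ : Matrix (Fin d) (Fin d) ℂ, ρ.PosSemidef →
        msupp ρ ≤ LinearMap.range (Matrix.toEuclideanLin P) →
        msupp (∑ k, M k * ρ * (M k)ᴴ) ≤ LinearMap.range (Matrix.toEuclideanLin P)) ↔
      ((∑ k, (M k)ᴴ * P * M k) - P).PosSemidef := by
  have hP : IsStarProjection P := ⟨hProj, hHerm⟩
  refine Iff.trans (forall₂_congr fun ρ hρ => ?_) (invariant_iff_krausDual_sub_posSemidef hTP hP)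
  exact imp_congr (hρ.isHermitian.msupp_le_range_iff hProj)
    ((hρ.krausMap M).isHermitian.msupp_le_range_iff hProj)
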